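/- Let L₀ be a finite co-Heyting algebra and L the extension generated over L₀ by a primitive tuple (x₁, x₂) with witness g. If x₁ = x₂ then JoinIrr(L) = JoinIrr(L₀) ∪ {x₁}; if x₁ ≠ x₂ then JoinIrr(L) = (JoinIrr(L₀) \ {g}) ∪ {x₁, x₂}. -/

import Mathlib

/-- `Ll b a` means `b ≪ a`: `a \ b = a` and `b ≤ a`. -/
def Ll {L : Type*} [CoheytingAlgebra L] (b a : L) : Prop := a \ b = a ∧ b ≤ a

/-- `S` is (the underlying set of) a co-Heyting subalgebra. -/
def IsSubalg {L : Type*} [CoheytingAlgebra L] (S : Set L) : Prop :=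
  ⊥ ∈ S ∧ ⊤ ∈ S ∧ ∀ a ∈ S, ∀ b ∈ S, a ⊔ b ∈ S ∧ a ⊓ b ∈ S ∧ a \ b ∈ S

/-- `g` is join irreducible in the subalgebra `S`. -/
def SupIrredIn {L : Type*} [CoheytingAlgebra L] (S : Set L) (g : L) : Prop :=
  g ∈ S ∧ g ≠ ⊥ ∧ ∀ x ∈ S, ∀ y ∈ S, g = x ⊔ y → g = x ∨ g = y

/-- `(x₁, x₂)` is a primitive tuple over the subalgebra `S`, with witness `g`
(join irreducible in `S`) whose predecessor in `S` is `gm` (`g⁻`). -/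
def Primitive {L : Type*} [CoheytingAlgebra L] (S : Set L) (g gm x₁ x₂ : L) : Prop :=
  x₁ ∉ S ∧ x₂ ∉ S ∧ SupIrredIn S g ∧ IsLUB {b | b ∈ S ∧ b < g} gm ∧
  gm ⊓ x₁ ∈ S ∧ gm ⊓ x₂ ∈ S ∧
  ((x₁ = x₂ ∧ Ll (gm ⊓ x₁) x₁ ∧ Ll x₁ g) ∨
   (x₁ ≠ x₂ ∧ x₁ ⊓ x₂ ∈ S ∧ g \ x₁ = x₂ ∧ g \ x₂ = x₁))

/-- `T` is the co-Heyting subalgebra generated by `S ∪ {x₁, x₂}`. -/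
def GeneratesOver {L : Type*} [CoheytingAlgebra L] (S T : Set L) (x₁ x₂ : L) : Prop :=
  IsSubalg T ∧ S ⊆ T ∧ x₁ ∈ T ∧ x₂ ∈ T ∧
  ∀ Tp : Set L, IsSubalg Tp → S ⊆ Tp → x₁ ∈ Tp → x₂ ∈ Tp → T ⊆ Tp

/-!
Every element of `L` is a combination `a ⊔ b ⊓ x₁ ⊔ c ⊓ x₂` with coefficients in `L₀`,
because these combinations already form a co-Heyting subalgebra. The key fact behind this is the
dichotomy for `s ∈ L₀`: either `g ≤ s`, or `s ⊓ g ≤ g⁻`. Since `x₁, x₂ ≤ g` and `g⁻ ⊓ xᵢ ∈ L₀`,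
each `b ⊓ xᵢ` is then either `xᵢ` itself or already in `L₀`, so an element of `L` is in `L₀` unless
it lies above `x₁` or `x₂`. Elements below `x₁` other than `x₁` thus lie in `L₀`, which makes `x₁`
join irreducible; a join irreducible `a` of `L₀` lying above some `xᵢ` lies above `g`, and the
retraction `u ↦ u \ g` (or `u ↦ u \ x₁` for `a = g` when `x₁ = x₂`) onto `L₀` transports its
irreducibility to `L`. Finally, for `x₁ ≠ x₂`, `g = x₁ ⊔ x₂` is no longer join irreducible.
-/

section

variable {L : Type*} [CoheytingAlgebra L] {S : Set L} {g gm x y a b s t u z : L}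

namespace IsSubalg

lemma bot_mem (hS : IsSubalg S) : ⊥ ∈ S := hS.1

lemma top_mem (hS : IsSubalg S) : ⊤ ∈ S := hS.2.1

lemma sup_mem (hS : IsSubalg S) (ha : a ∈ S) (hb : b ∈ S) : a ⊔ b ∈ S := (hS.2.2 a ha b hb).1

lemma inf_mem (hS : IsSubalg S) (ha : a ∈ S) (hb : b ∈ S) : a ⊓ b ∈ S := (hS.2.2 a ha b hb).2.1

lemma sdiff_mem (hS : IsSubalg S) (ha : a ∈ S) (hb : b ∈ S) : a \ b ∈ S := (hS.2.2 a ha b hb).2.2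

end IsSubalg

lemma SupIrred.supIrredIn (ha : SupIrred a) (haS : a ∈ S) : SupIrredIn S a :=
  ⟨haS, ha.ne_bot, fun _ _ _ _ h => (ha.2 h.symm).imp Eq.symm Eq.symm⟩

lemma supIrred_of_forall_lt_mem (hS : IsSubalg S) (hxS : x ∉ S) (hlt : ∀ u < x, u ∈ S) :
    SupIrred x := by
  refine ⟨fun hmin => hxS (hmin.eq_bot ▸ hS.bot_mem), fun u v huv => ?_⟩
  by_contra! hne
  have hu : u < x := (huv ▸ le_sup_left : u ≤ x).lt_of_ne hne.1
  have hv : v < x := (huv ▸ le_sup_right : v ≤ x).lt_of_ne hne.2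
  exact hxS (huv ▸ hS.sup_mem (hlt u hu) (hlt v hv))

namespace SupIrredIn

lemma supIrred_of_forall_le_mem (ha : SupIrredIn S a) (hle : ∀ u ≤ a, u ∈ S) : SupIrred a := by
  refine ⟨not_isMin_iff_ne_bot.mpr ha.2.1, fun u v huv => ?_⟩
  exact (ha.2.2 u (hle u (huv ▸ le_sup_left)) v (hle v (huv ▸ le_sup_right)) huv.symm).imp
    Eq.symm Eq.symm

/-- `u ↦ u \ z` preserves joins and is deflationary, so it carries a decomposition of `a` in `L`
to one in `S`. -/
lemma supIrred_of_sdiff_mem (ha : SupIrredIn S a) (hz : ∀ u, u \ z ∈ S) (haz : a \ z = a) :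
    SupIrred a := by
  refine ⟨not_isMin_iff_ne_bot.mpr ha.2.1, fun u v huv => ?_⟩
  have hdecomp : a = u \ z ⊔ v \ z := by rw [← sup_sdiff, huv, haz]
  rcases ha.2.2 _ (hz u) _ (hz v) hdecomp with h | h
  · exact Or.inl (le_antisymm (huv ▸ le_sup_left) (h.le.trans sdiff_le))
  · exact Or.inr (le_antisymm (huv ▸ le_sup_right) (h.le.trans sdiff_le))

lemma sdiff_eq_self (hS : IsSubalg S) (ha : SupIrredIn S a) (hb : b ∈ S) (hba : b ≤ a)
    (hne : a ≠ b) : a \ b = a :=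
  ((ha.2.2 b hb _ (hS.sdiff_mem ha.1 hb) (sup_sdiff_cancel_right hba).symm).resolve_left hne).symm

lemma sdiff_eq_self_of_isLUB (hfin : S.Finite) (hS : IsSubalg S) (hg : SupIrredIn S g)
    (hgm : IsLUB {b | b ∈ S ∧ b < g} gm) : g \ gm = g := by
  have hF : {b | b ∈ S ∧ b < g}.Finite := hfin.subset fun _ hb => hb.1
  have hgm_eq : gm = hF.toFinset.sup id :=
    hgm.unique (by simpa using Finset.isLUB_sup_id (s := hF.toFinset))
  obtain ⟨hgmS, hgm_ne⟩ : gm ∈ S ∧ gm ≠ g := by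
    rw [hgm_eq]
    refine Finset.sup_induction (p := fun c => c ∈ S ∧ c ≠ g) ⟨hS.bot_mem, hg.2.1.symm⟩
      (fun a ⟨haS, hag⟩ b ⟨hbS, hbg⟩ => ⟨hS.sup_mem haS hbS, fun h => ?_⟩) fun b hb => ?_
    · exact (hg.2.2 a haS b hbS h.symm).elim (hag ∘ Eq.symm) (hbg ∘ Eq.symm)
    · exact ⟨(hF.mem_toFinset.1 hb).1, (hF.mem_toFinset.1 hb).2.ne⟩
  exact hg.sdiff_eq_self hS hgmS (hgm.2 fun _ hb => hb.2.le) hgm_ne.symm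

end SupIrredIn

lemma le_or_inf_le_of_mem_upperBounds (hS : IsSubalg S) (hg : g ∈ S)
    (hgm : gm ∈ upperBounds {b | b ∈ S ∧ b < g}) (hs : s ∈ S) : g ≤ s ∨ s ⊓ g ≤ gm :=
  or_iff_not_imp_left.mpr fun h => inf_comm g s ▸ hgm ⟨hS.inf_mem hg hs, inf_lt_left.mpr h⟩

/-- In the paper's notation: `x ≤ g`, `g⁻ ⊓ x ∈ L₀` and `g⁻ ⊓ x ≪ x`. -/
structure Attached (S : Set L) (g gm x : L) : Prop where
  le : x ≤ g
  inf_mem : gm ⊓ x ∈ S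
  sdiff_eq : x \ gm = x

lemma Ll.attached (hxg : Ll x g) (hgmx : gm ⊓ x ∈ S) (hll : Ll (gm ⊓ x) x) : Attached S g gm x :=
  ⟨hxg.2, hgmx, by simpa [sdiff_inf] using hll.1⟩

lemma attached_sdiff (hgm : gm ⊓ g \ y ∈ S) (hggm : g \ gm = g) : Attached S g gm (g \ y) :=
  ⟨sdiff_le, hgm, by rw [sdiff_sdiff_comm, hggm]⟩

lemma inf_mem_of_inf_le (hS : IsSubalg S) (hs : s ∈ S) (hx : gm ⊓ x ∈ S) (h : s ⊓ x ≤ gm) :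
    s ⊓ x ∈ S := by
  rw [← inf_eq_right.mpr h, inf_left_comm]
  exact hS.inf_mem hs hx

lemma Attached.inf_eq_or_mem (hx : Attached S g gm x) (hS : IsSubalg S)
    (hsplit : ∀ s ∈ S, g ≤ s ∨ s ⊓ g ≤ gm) (hb : b ∈ S) : b ⊓ x = x ∨ b ⊓ x ∈ S :=
  (hsplit b hb).imp (fun h => inf_eq_right.mpr (hx.le.trans h))
    fun h => inf_mem_of_inf_le hS hb hx.inf_mem ((inf_le_inf_left b hx.le).trans h)

lemma Attached.inf_mem_of_not_le (hx : Attached S g gm x) (hS : IsSubalg S)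
    (hsplit : ∀ s ∈ S, g ≤ s ∨ s ⊓ g ≤ gm) (hb : b ∈ S) (hle : b ⊓ x ≤ u) (hxu : ¬x ≤ u) :
    b ⊓ x ∈ S :=
  (hx.inf_eq_or_mem hS hsplit hb).resolve_left fun h => hxu (h ▸ hle)

lemma Attached.le_of_le (hx : Attached S g gm x) (hsplit : ∀ s ∈ S, g ≤ s ∨ s ⊓ g ≤ gm)
    (hxS : x ∉ S) (ha : a ∈ S) (hxa : x ≤ a) : g ≤ a :=
  (hsplit a ha).resolve_right fun h =>
    hxS (inf_eq_right.mpr ((le_inf hxa hx.le).trans h) ▸ hx.inf_mem)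

lemma Attached.sdiff_eq_self_of_inf_le (hx : Attached S g gm x) (h : s ⊓ g ≤ gm) : x \ s = x := by
  have hxs : x ⊓ s ≤ gm := (le_inf inf_le_right (inf_le_left.trans hx.le)).trans h
  refine le_antisymm sdiff_le ?_
  calc x = x \ gm := hx.sdiff_eq.symm
    _ ≤ x \ (x ⊓ s) := sdiff_le_sdiff_left hxs
    _ = x \ s := sdiff_inf_self_left x s

def lincomb (S : Set L) (x y : L) : Set L :=
  {t | ∃ a ∈ S, ∃ b ∈ S, ∃ c ∈ S, t = a ⊔ b ⊓ x ⊔ c ⊓ y}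

lemma lincomb_comm : lincomb S x y = lincomb S y x := by
  ext t
  constructor <;> rintro ⟨a, ha, b, hb, c, hc, rfl⟩ <;>
    exact ⟨a, ha, c, hc, b, hb, sup_right_comm _ _ _⟩

lemma mem_lincomb_of_mem (hS : IsSubalg S) (hs : s ∈ S) : s ∈ lincomb S x y :=
  ⟨s, hs, ⊥, hS.bot_mem, ⊥, hS.bot_mem, by simp⟩

lemma inf_left_mem_lincomb (hS : IsSubalg S) (hb : b ∈ S) : b ⊓ x ∈ lincomb S x y :=
  ⟨⊥, hS.bot_mem, b, hb, ⊥, hS.bot_mem, by simp⟩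

lemma left_mem_lincomb (hS : IsSubalg S) : x ∈ lincomb S x y := by
  simpa using inf_left_mem_lincomb (y := y) hS hS.top_mem

lemma right_mem_lincomb (hS : IsSubalg S) : y ∈ lincomb S x y :=
  lincomb_comm (S := S) ▸ left_mem_lincomb hS

lemma sup_mem_lincomb (hS : IsSubalg S) (ht : t ∈ lincomb S x y) (hu : u ∈ lincomb S x y) :
    t ⊔ u ∈ lincomb S x y := by
  obtain ⟨a, ha, b, hb, c, hc, rfl⟩ := ht
  obtain ⟨a', ha', b', hb', c', hc', rfl⟩ := hu
  refine ⟨a ⊔ a', hS.sup_mem ha ha', b ⊔ b', hS.sup_mem hb hb', c ⊔ c', hS.sup_mem hc hc', ?_⟩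
  rw [inf_sup_right, inf_sup_right]
  ac_rfl

lemma inf_mem_lincomb_of_mem (hS : IsSubalg S) (hs : s ∈ S) (ht : t ∈ lincomb S x y) :
    s ⊓ t ∈ lincomb S x y := by
  obtain ⟨a, ha, b, hb, c, hc, rfl⟩ := ht
  exact ⟨s ⊓ a, hS.inf_mem hs ha, s ⊓ b, hS.inf_mem hs hb, s ⊓ c, hS.inf_mem hs hc,
    by simp only [inf_sup_left, inf_assoc]⟩

lemma left_inf_mem_lincomb (hS : IsSubalg S) (hxy : x ⊓ y ∈ lincomb S x y)
    (ht : t ∈ lincomb S x y) : x ⊓ t ∈ lincomb S x y := by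
  obtain ⟨a, ha, b, hb, c, hc, rfl⟩ := ht
  rw [inf_sup_left, inf_sup_left, inf_comm x a, inf_left_comm, inf_idem, inf_left_comm]
  exact sup_mem_lincomb hS (sup_mem_lincomb hS (inf_left_mem_lincomb hS ha)
    (inf_left_mem_lincomb hS hb)) (inf_mem_lincomb_of_mem hS hc hxy)

lemma inf_mem_lincomb (hS : IsSubalg S) (hxy : x ⊓ y ∈ lincomb S x y)
    (ht : t ∈ lincomb S x y) (hu : u ∈ lincomb S x y) : t ⊓ u ∈ lincomb S x y := by
  have hyx : y ⊓ x ∈ lincomb S y x := by rw [inf_comm, ← lincomb_comm]; exact hxy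
  obtain ⟨a, ha, b, hb, c, hc, rfl⟩ := ht
  rw [inf_sup_right, inf_sup_right, inf_assoc, inf_assoc]
  refine sup_mem_lincomb hS (sup_mem_lincomb hS (inf_mem_lincomb_of_mem hS ha hu)
    (inf_mem_lincomb_of_mem hS hb (left_inf_mem_lincomb hS hxy hu)))
    (inf_mem_lincomb_of_mem hS hc ?_)
  rw [lincomb_comm] at hu ⊢
  exact left_inf_mem_lincomb hS hyx hu

lemma sdiff_mem_lincomb (hS : IsSubalg S)
    (hs : ∀ t ∈ lincomb S x y, ∀ s ∈ S, t \ s ∈ lincomb S x y)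
    (hx : ∀ t ∈ lincomb S x y, t \ x ∈ lincomb S x y)
    (hy : ∀ t ∈ lincomb S x y, t \ y ∈ lincomb S x y)
    (ht : t ∈ lincomb S x y) (hu : u ∈ lincomb S x y) : t \ u ∈ lincomb S x y := by
  have hx' : ∀ v ∈ lincomb S x y, ∀ b ∈ S, v \ (b ⊓ x) ∈ lincomb S x y := fun v hv b hb => by
    rw [sdiff_inf]; exact sup_mem_lincomb hS (hs v hv b hb) (hx v hv)
  have hy' : ∀ v ∈ lincomb S x y, ∀ c ∈ S, v \ (c ⊓ y) ∈ lincomb S x y := fun v hv c hc => by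
    rw [sdiff_inf]; exact sup_mem_lincomb hS (hs v hv c hc) (hy v hv)
  obtain ⟨a, ha, b, hb, c, hc, rfl⟩ := hu
  rw [← sdiff_sdiff_left, ← sdiff_sdiff_left]
  exact hy' _ (hx' _ (hs t ht a ha) b hb) c hc

lemma Attached.inf_sdiff_mem_lincomb (hx : Attached S g gm x) (hS : IsSubalg S)
    (hsplit : ∀ s ∈ S, g ≤ s ∨ s ⊓ g ≤ gm) (hb : b ∈ S) (hs : s ∈ S) :
    (b ⊓ x) \ s ∈ lincomb S x y := by
  rcases hsplit s hs with h | h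
  · rw [sdiff_eq_bot_iff.mpr (inf_le_right.trans (hx.le.trans h))]
    exact mem_lincomb_of_mem hS hS.bot_mem
  · rcases hx.inf_eq_or_mem hS hsplit hb with hbx | hbx
    · rw [hbx, hx.sdiff_eq_self_of_inf_le h]
      exact left_mem_lincomb hS
    · exact mem_lincomb_of_mem hS (hS.sdiff_mem hbx hs)

lemma Attached.sdiff_mem_of_inf_le (hx : Attached S g gm x) (hS : IsSubalg S) (hs : s ∈ S)
    (h : s ⊓ g ≤ gm) : s \ x ∈ S := by
  rw [← sdiff_inf_self_left]
  exact hS.sdiff_mem hs (inf_mem_of_inf_le hS hs hx.inf_mem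
    ((inf_le_inf_left s hx.le).trans h))

lemma Attached.sdiff_mem (hx : Attached S g gm x) (hS : IsSubalg S)
    (hsplit : ∀ s ∈ S, g ≤ s ∨ s ⊓ g ≤ gm) (hgS : g ∈ S) (hgx : g \ x ∈ S) (hs : s ∈ S) :
    s \ x ∈ S := by
  rcases hsplit s hs with h | h
  · rw [← sdiff_sup_sdiff_cancel h hx.le]
    exact hS.sup_mem (hS.sdiff_mem hs hgS) hgx
  · exact hx.sdiff_mem_of_inf_le hS hs h

lemma Attached.sdiff_mem_lincomb_of_mem (hx : Attached S g gm x) (hS : IsSubalg S)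
    (hsplit : ∀ s ∈ S, g ≤ s ∨ s ⊓ g ≤ gm) (hgS : g ∈ S) (hgx : g \ x ∈ lincomb S x y)
    (hs : s ∈ S) : s \ x ∈ lincomb S x y := by
  rcases hsplit s hs with h | h
  · rw [← sdiff_sup_sdiff_cancel h hx.le]
    exact sup_mem_lincomb hS (mem_lincomb_of_mem hS (hS.sdiff_mem hs hgS)) hgx
  · exact mem_lincomb_of_mem hS (hx.sdiff_mem_of_inf_le hS hs h)

lemma Attached.sdiff_mem_lincomb (hx : Attached S g gm x) (hy : Attached S g gm y)
    (hS : IsSubalg S) (hsplit : ∀ s ∈ S, g ≤ s ∨ s ⊓ g ≤ gm) (hgS : g ∈ S)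
    (hgx : g \ x ∈ lincomb S x y) (hyx : y \ x ∈ lincomb S x y) (ht : t ∈ lincomb S x y) :
    t \ x ∈ lincomb S x y := by
  obtain ⟨a, ha, b, -, c, hc, rfl⟩ := ht
  rw [sup_sdiff, sup_sdiff, sdiff_eq_bot_iff.mpr (inf_le_right : b ⊓ x ≤ x), sup_bot_eq]
  refine sup_mem_lincomb hS (hx.sdiff_mem_lincomb_of_mem hS hsplit hgS hgx ha) ?_
  rcases hy.inf_eq_or_mem hS hsplit hc with hcy | hcy
  · rwa [hcy]
  · exact hx.sdiff_mem_lincomb_of_mem hS hsplit hgS hgx hcy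

lemma sdiff_mem_lincomb_of_mem (hx : Attached S g gm x) (hy : Attached S g gm y)
    (hS : IsSubalg S) (hsplit : ∀ s ∈ S, g ≤ s ∨ s ⊓ g ≤ gm) (hs : s ∈ S)
    (ht : t ∈ lincomb S x y) : t \ s ∈ lincomb S x y := by
  obtain ⟨a, ha, b, hb, c, hc, rfl⟩ := ht
  rw [sup_sdiff, sup_sdiff]
  refine sup_mem_lincomb hS (sup_mem_lincomb hS (mem_lincomb_of_mem hS (hS.sdiff_mem ha hs))
    (hx.inf_sdiff_mem_lincomb hS hsplit hb hs)) ?_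
  rw [lincomb_comm]
  exact hy.inf_sdiff_mem_lincomb hS hsplit hc hs

theorem isSubalg_lincomb (hx : Attached S g gm x) (hy : Attached S g gm y) (hS : IsSubalg S)
    (hsplit : ∀ s ∈ S, g ≤ s ∨ s ⊓ g ≤ gm) (hgS : g ∈ S) (hgx : g \ x ∈ lincomb S x y)
    (hgy : g \ y ∈ lincomb S x y) (hxy : x ⊓ y ∈ lincomb S x y) (hxy' : x \ y ∈ lincomb S x y)
    (hyx : y \ x ∈ lincomb S x y) : IsSubalg (lincomb S x y) := by
  refine ⟨mem_lincomb_of_mem hS hS.bot_mem, mem_lincomb_of_mem hS hS.top_mem, fun t ht u hu =>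
    ⟨sup_mem_lincomb hS ht hu, inf_mem_lincomb hS hxy ht hu, sdiff_mem_lincomb hS
      (fun t ht s hs => sdiff_mem_lincomb_of_mem hx hy hS hsplit hs ht)
      (fun t ht => hx.sdiff_mem_lincomb hy hS hsplit hgS hgx hyx ht) (fun t ht => ?_) ht hu⟩⟩
  rw [lincomb_comm] at ht hgy hxy' ⊢
  exact hy.sdiff_mem_lincomb hx hS hsplit hgS hgy hxy' ht

lemma GeneratesOver.mem_lincomb (hgen : GeneratesOver S Set.univ x y) (hS : IsSubalg S)
    (hT : IsSubalg (lincomb S x y)) (u : L) : u ∈ lincomb S x y :=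
  hgen.2.2.2.2 _ hT (fun _ => mem_lincomb_of_mem hS) (left_mem_lincomb hS) (right_mem_lincomb hS)
    (Set.mem_univ u)

lemma mem_or_eq_of_supIrred (hx : Attached S g gm x) (hy : Attached S g gm y) (hS : IsSubalg S)
    (hsplit : ∀ s ∈ S, g ≤ s ∨ s ⊓ g ≤ gm) (hu : a ∈ lincomb S x y) (ha : SupIrred a) :
    a ∈ S ∨ a = x ∨ a = y := by
  have key {b z : L} (hz : Attached S g gm z) (hb : b ∈ S) (h : b ⊓ z = a) : a ∈ S ∨ a = z :=
    (hz.inf_eq_or_mem hS hsplit hb).symm.imp (h ▸ ·) h.symm.trans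
  obtain ⟨s, hs, b, hb, c, hc, hu⟩ := hu
  rcases ha.2 hu.symm with h | h
  · rcases ha.2 h with h | h
    · exact Or.inl (h ▸ hs)
    · exact (key hx hb h).imp_right Or.inl
  · exact (key hy hc h).imp_right Or.inr

lemma mem_of_not_le (hx : Attached S g gm x) (hy : Attached S g gm y) (hS : IsSubalg S)
    (hsplit : ∀ s ∈ S, g ≤ s ∨ s ⊓ g ≤ gm) (hu : u ∈ lincomb S x y) (hxu : ¬x ≤ u)
    (hyu : ¬y ≤ u) : u ∈ S := by
  obtain ⟨s, hs, b, hb, c, hc, rfl⟩ := hu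
  exact hS.sup_mem (hS.sup_mem hs
    (hx.inf_mem_of_not_le hS hsplit hb (le_sup_right.trans le_sup_left) hxu))
    (hy.inf_mem_of_not_le hS hsplit hc le_sup_right hyu)

lemma sdiff_mem_of_mem_lincomb (hxz : x ≤ z) (hyz : y ≤ z) (hz : ∀ s ∈ S, s \ z ∈ S)
    (hu : u ∈ lincomb S x y) : u \ z ∈ S := by
  obtain ⟨s, hs, b, -, c, -, rfl⟩ := hu
  rw [sup_sdiff, sup_sdiff, sdiff_eq_bot_iff.mpr (inf_le_right.trans hxz),
    sdiff_eq_bot_iff.mpr (inf_le_right.trans hyz), sup_bot_eq, sup_bot_eq]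
  exact hz s hs

lemma Attached.supIrred (hx : Attached S g gm x) (hy : Attached S g gm y) (hS : IsSubalg S)
    (hsplit : ∀ s ∈ S, g ≤ s ∨ s ⊓ g ≤ gm) (hall : ∀ u, u ∈ lincomb S x y) (hxS : x ∉ S)
    (hyx : ¬y < x) : SupIrred x :=
  supIrred_of_forall_lt_mem hS hxS fun u hu =>
    mem_of_not_le hx hy hS hsplit (hall u) hu.not_ge fun hyu => hyx (hyu.trans_lt hu)

/-- A join irreducible of `S` above `x` or `y` lies above `g`, hence is fixed by `u ↦ u \ g`. -/
lemma SupIrredIn.supIrred_of_ne (ha : SupIrredIn S a) (hx : Attached S g gm x)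
    (hy : Attached S g gm y) (hS : IsSubalg S) (hsplit : ∀ s ∈ S, g ≤ s ∨ s ⊓ g ≤ gm)
    (hgS : g ∈ S) (hall : ∀ u, u ∈ lincomb S x y) (hxS : x ∉ S) (hyS : y ∉ S) (hag : a ≠ g) :
    SupIrred a := by
  by_cases hxya : x ≤ a ∨ y ≤ a
  · have hga : g ≤ a := hxya.elim (hx.le_of_le hsplit hxS ha.1) (hy.le_of_le hsplit hyS ha.1)
    exact ha.supIrred_of_sdiff_mem (fun u => sdiff_mem_of_mem_lincomb hx.le hy.le
      (fun s hs => hS.sdiff_mem hs hgS) (hall u)) (ha.sdiff_eq_self hS hgS hga hag)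
  · rw [not_or] at hxya
    exact ha.supIrred_of_forall_le_mem fun u hu => mem_of_not_le hx hy hS hsplit (hall u)
      (fun h => hxya.1 (h.trans hu)) (fun h => hxya.2 (h.trans hu))

theorem setOf_supIrred_eq_union_of_eq (hS : IsSubalg S) (hg : SupIrredIn S g)
    (hsplit : ∀ s ∈ S, g ≤ s ∨ s ⊓ g ≤ gm) (hx : Attached S g gm x) (hxS : x ∉ S)
    (hgx : g \ x = g) (hgen : GeneratesOver S Set.univ x x) :
    {a : L | SupIrred a} = {a : L | SupIrredIn S a} ∪ {x} := by
  have hgx' : g \ x ∈ lincomb S x x := by rw [hgx]; exact mem_lincomb_of_mem hS hg.1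
  have hxx : x \ x ∈ lincomb S x x := sdiff_self (a := x) ▸ mem_lincomb_of_mem hS hS.bot_mem
  have hall := hgen.mem_lincomb hS <| isSubalg_lincomb hx hx hS hsplit hg.1 hgx' hgx'
    ((inf_idem x).symm ▸ left_mem_lincomb hS) hxx hxx
  ext a
  refine ⟨fun ha => ?_, ?_⟩
  · rcases mem_or_eq_of_supIrred hx hx hS hsplit (hall a) ha with h | h | h
    exacts [Or.inl (ha.supIrredIn h), Or.inr h, Or.inr h]
  · rintro (ha | rfl)
    · by_cases hag : a = g
      · subst hag
        exact ha.supIrred_of_sdiff_mem (fun u => sdiff_mem_of_mem_lincomb le_rfl le_rfl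
          (fun s hs => hx.sdiff_mem hS hsplit hg.1 (by rw [hgx]; exact hg.1) hs) (hall u)) hgx
      · exact ha.supIrred_of_ne hx hx hS hsplit hg.1 hall hxS hxS hag
    · exact hx.supIrred hx hS hsplit hall hxS (lt_irrefl _)

theorem setOf_supIrred_eq_union_of_ne (hfin : S.Finite) (hS : IsSubalg S) (hg : SupIrredIn S g)
    (hgm : IsLUB {b | b ∈ S ∧ b < g} gm) (hxS : x ∉ S) (hyS : y ∉ S) (hgmx : gm ⊓ x ∈ S)
    (hgmy : gm ⊓ y ∈ S) (hxy : x ⊓ y ∈ S) (hgx : g \ x = y) (hgy : g \ y = x)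
    (hgen : GeneratesOver S Set.univ x y) :
    {a : L | SupIrred a} = ({a : L | SupIrredIn S a} \ {g}) ∪ {x, y} := by
  have hsplit s (hs : s ∈ S) := le_or_inf_le_of_mem_upperBounds hS hg.1 hgm.1 hs
  have hggm := hg.sdiff_eq_self_of_isLUB hfin hS hgm
  have hx : Attached S g gm x := hgy ▸ attached_sdiff (hgy.symm ▸ hgmx) hggm
  have hy : Attached S g gm y := hgx ▸ attached_sdiff (hgx.symm ▸ hgmy) hggm
  have hg_eq : g = x ⊔ y := by rw [← hgx, sup_sdiff_cancel_right hx.le]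
  have hxy' : x \ y = x := by rw [← hgy, sdiff_idem]
  have hyx : y \ x = y := by rw [← hgx, sdiff_idem]
  have hall := hgen.mem_lincomb hS <| isSubalg_lincomb hx hy hS hsplit hg.1
    (by rw [hgx]; exact right_mem_lincomb hS) (by rw [hgy]; exact left_mem_lincomb hS)
    (mem_lincomb_of_mem hS hxy) (by rw [hxy']; exact left_mem_lincomb hS)
    (by rw [hyx]; exact right_mem_lincomb hS)
  have hyx_le : ¬y ≤ x := fun h => hxS (by rw [← sup_eq_left.mpr h, ← hg_eq]; exact hg.1)
  have hxy_le : ¬x ≤ y := fun h => hyS (by rw [← sup_eq_right.mpr h, ← hg_eq]; exact hg.1)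
  ext a
  refine ⟨fun ha => ?_, ?_⟩
  · rcases mem_or_eq_of_supIrred hx hy hS hsplit (hall a) ha with h | h | h
    · refine Or.inl ⟨ha.supIrredIn h, fun hag => ?_⟩
      rcases ha.2 (hg_eq.symm.trans hag.symm) with h' | h'
      exacts [hxS (h' ▸ h), hyS (h' ▸ h)]
    · exact Or.inr (Or.inl h)
    · exact Or.inr (Or.inr h)
  · rintro (⟨ha, hag⟩ | rfl | rfl)
    · exact ha.supIrred_of_ne hx hy hS hsplit hg.1 hall hxS hyS hag
    · exact hx.supIrred hy hS hsplit hall hxS fun h => hyx_le h.le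
    · exact hy.supIrred hx hS hsplit (lincomb_comm (S := S) ▸ hall) hyS fun h => hxy_le h.le

end

theorem primitive_extension_supIrred {L : Type*} [CoheytingAlgebra L]
    (S : Set L) (hfin : S.Finite) (hS : IsSubalg S) (g gm x₁ x₂ : L)
    (hp : Primitive S g gm x₁ x₂) (hgen : GeneratesOver S Set.univ x₁ x₂) :
    (x₁ = x₂ → {a : L | SupIrred a} = {a : L | SupIrredIn S a} ∪ {x₁}) ∧
    (x₁ ≠ x₂ → {a : L | SupIrred a} = ({a : L | SupIrredIn S a} \ {g}) ∪ {x₁, x₂}) := by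
  obtain ⟨hx₁, hx₂, hg, hgm, hgm₁, hgm₂, hcase⟩ := hp
  rcases hcase with ⟨rfl, hll₁, hll₂⟩ | ⟨hne, h₁₂, hd₁, hd₂⟩
  · refine ⟨fun _ => ?_, fun h => (h rfl).elim⟩
    exact setOf_supIrred_eq_union_of_eq hS hg
      (fun s hs => le_or_inf_le_of_mem_upperBounds hS hg.1 hgm.1 hs)
      (hll₂.attached hgm₁ hll₁) hx₁ hll₂.1 hgen
  · exact ⟨fun h => (hne h).elim, fun _ => setOf_supIrred_eq_union_of_ne hfin hS hg hgm hx₁ hx₂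
      hgm₁ hgm₂ h₁₂ hd₁ hd₂ hgen⟩
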